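/- arXiv:1511.05706 — 5 statements merged into one kernel-verified Lean document; each statement's English description precedes it below -/
import Mathlib

section
/- Let f(x) = Σ_{m≥0} a_m x^m be a real power series with all coefficients a_m ≥ 0 and infinite radius of convergence. If A ∈ ℝ^{T×T} is symmetric positive semidefinite, then the matrix f[A] obtained by applying f entrywise, (f[A])_{rs} = f(A_{rs}), is positive semidefinite. -/
/-!
By the Schur product theorem the entrywise powers `A^{∘m}` of a positive semidefinite `A` are
positive semidefinite, so `f[A] = ∑ₘ aₘ A^{∘m}` is a convergent series in the cone of positive
semidefinite matrices, which is closed.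
-/

open Matrix

namespace Matrix

open scoped ComplexOrder

variable {n 𝕜 : Type*} [RCLike 𝕜]

theorem isClosed_setOf_posSemidef : IsClosed {M : Matrix n n 𝕜 | M.PosSemidef} := by
  simp only [PosSemidef, IsHermitian, Set.ofPred_and, Set.ofPred_forall]
  refine (isClosed_eq continuous_id.matrix_conjTranspose continuous_id).inter <|
    isClosed_iInter fun x => isClosed_le continuous_const ?_
  simp only [Finsupp.sum]
  fun_prop

theorem PosSemidef.tsum {ι : Type*} {f : ι → Matrix n n 𝕜} (hf : ∀ i, (f i).PosSemidef) :
    (∑' i, f i).PosSemidef := by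
  by_cases hs : Summable f
  · exact isClosed_setOf_posSemidef.mem_of_tendsto hs.hasSum <|
      .of_forall fun s => posSemidef_sum s fun i _ => hf i
  · simpa [tsum_eq_zero_of_not_summable hs] using PosSemidef.zero

theorem posSemidef_of_const_one [Finite n] : (of fun _ _ => 1 : Matrix n n 𝕜).PosSemidef := by
  simpa [vecMulVec] using posSemidef_vecMulVec_star_self (1 : n → 𝕜)

theorem PosSemidef.entrywise_pow [Finite n] {A : Matrix n n 𝕜} (hA : A.PosSemidef) (m : ℕ) :
    (of fun i j => A i j ^ m).PosSemidef := by
  induction m with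
  | zero => simpa using posSemidef_of_const_one
  | succ m ih =>
    convert ih.hadamard hA using 1
    ext i j
    simp [pow_succ]

end Matrix

theorem entrywise_power_series_posSemidef (T : ℕ) (a : ℕ → ℝ)
    (ha : ∀ m, 0 ≤ a m)
    (hconv : ∀ x : ℝ, Summable fun m => a m * x ^ m)
    (A : Matrix (Fin T) (Fin T) ℝ) (hA : A.PosSemidef) :
    (Matrix.of fun r s => ∑' m : ℕ, a m * A r s ^ m).PosSemidef := by
  have hseries : HasSum (fun m => a m • of fun r s => A r s ^ m)
      (of fun r s => ∑' m, a m * A r s ^ m) :=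
    Pi.hasSum.mpr fun r => Pi.hasSum.mpr fun s => (hconv (A r s)).hasSum
  rw [← hseries.tsum_eq]
  exact PosSemidef.tsum fun m => (hA.entrywise_pow m).smul (ha m)
end

section
/- Let ρ ∈ ℝ^{T×T} be symmetric positive semidefinite, k ∈ ℕ, k ≥ 1, and p = 2k/(2k−1). Then the maximum of Σ_{r,s} Θ_{rs} ρ_{rs} − (1/2) Σ_{r,s} |Θ_{rs}|^p over the cone of symmetric positive semidefinite matrices Θ equals its maximum over all of ℝ^{T×T}, namely (1/(4k−2)) ((2k−1)/k)^{2k} Σ_{r,s} ρ_{rs}^{2k}, and the maximizer Θ*_{rs} = ((2k−1)/k)^{2k−1} ρ_{rs}^{2k−1} is positive semidefinite. -/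
/-! Entrywise, `x * a - |x| ^ p / 2` is bounded by Young's inequality for the conjugate exponents
`p = 2k / (2k - 1)` and `2k`, suitably rescaled, with equality at `x = (c * a) ^ (2k - 1)` where
`c = (2k - 1) / k`; summing over the entries gives the unconstrained maximum. That maximizer is a
nonnegative multiple of the Hadamard power `ρ ^ (2k - 1)`, positive semidefinite by the Schur
product theorem, so the constraint `Θ ⪰ 0` is inactive. -/

open Matrix Finset
open scoped ComplexOrder

theorem Matrix.PosSemidef.map_pow {n 𝕜 : Type*} [RCLike 𝕜] {A : Matrix n n 𝕜}
    (hA : A.PosSemidef) {m : ℕ} (hm : m ≠ 0) : (A.map (· ^ m)).PosSemidef := by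
  induction m with
  | zero => exact absurd rfl hm
  | succ m ih =>
    rcases eq_or_ne m 0 with rfl | hm'
    · simpa using hA
    · have h : A.map (· ^ (m + 1)) = A.map (· ^ m) ⊙ A := by ext; simp [pow_succ]
      exact h ▸ (ih hm').hadamard hA

theorem Real.mul_le_rpow_div_add {p q : ℝ} (hpq : p.HolderConjugate q) {c : ℝ} (hc : 0 < c)
    (x a : ℝ) : x * a ≤ |x| ^ p / (c * p) + c ^ (q - 1) * |a| ^ q / q := by
  set l := c ^ p⁻¹ with hl
  have hl0 : 0 < l := Real.rpow_pos_of_pos hc _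
  have hlp : l ^ p = c := by
    rw [hl, ← Real.rpow_mul hc.le, inv_mul_cancel₀ hpq.ne_zero, Real.rpow_one]
  have hlq : l ^ q = c ^ (q - 1) := by
    rw [hl, ← Real.rpow_mul hc.le, inv_mul_eq_div, hpq.symm.div_conj_eq_sub_one]
  calc x * a = (x / l) * (l * a) := by field_simp
    _ ≤ |x / l| ^ p / p + |l * a| ^ q / q := Real.young_inequality _ _ hpq
    _ = |x| ^ p / (c * p) + c ^ (q - 1) * |a| ^ q / q := by
      rw [abs_div, abs_mul, abs_of_pos hl0, Real.div_rpow (abs_nonneg _) hl0.le,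
        Real.mul_rpow hl0.le (abs_nonneg _), hlp, hlq, div_div]

theorem Real.pow_rpow_div_eq_pow {y : ℝ} (hy : 0 ≤ y) {m : ℕ} (hm : m ≠ 0) (n : ℕ) :
    (y ^ m) ^ ((n : ℝ) / m) = y ^ n := by
  rw [← Real.rpow_natCast y m, ← Real.rpow_mul hy, mul_div_cancel₀ _ (Nat.cast_ne_zero.2 hm),
    Real.rpow_natCast]

section OddPowerConjugate

variable {k : ℕ}

lemma cast_two_mul_sub_one {R : Type*} [Ring R] (hk : 1 ≤ k) :
    ((2 * k - 1 : ℕ) : R) = 2 * k - 1 := by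
  rw [Nat.cast_sub (by omega), Nat.cast_mul, Nat.cast_ofNat, Nat.cast_one]

lemma pow_two_mul_sub_one_mul {M : Type*} [Monoid M] (hk : 1 ≤ k) (x : M) :
    x ^ (2 * k - 1) * x = x ^ (2 * k) := by
  rw [← pow_succ, Nat.sub_add_cancel (by omega)]

lemma mul_sub_half_abs_rpow_le (hk : 1 ≤ k) (x a : ℝ) :
    x * a - 1 / 2 * |x| ^ ((2 * k : ℝ) / (2 * k - 1)) ≤
      1 / (4 * (k : ℝ) - 2) * ((2 * k - 1 : ℝ) / k) ^ (2 * k) * a ^ (2 * k) := by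
  have hk' : (1 : ℝ) ≤ k := by exact_mod_cast hk
  set c : ℝ := (2 * k - 1) / k with hc_def
  have hk1 : (0 : ℝ) < 2 * k - 1 := by linarith
  have hc : 0 < c := div_pos hk1 (by linarith)
  have hpq : ((2 * k : ℝ) / (2 * k - 1)).HolderConjugate (2 * k) :=
    (Real.HolderConjugate.conjExponent (by linarith)).symm
  have hcp : c * ((2 * k : ℝ) / (2 * k - 1)) = 2 := by
    rw [hc_def]; field_simp [hk1.ne']
  have hcq : c ^ ((2 * k : ℝ) - 1) = c ^ (2 * k - 1) := by
    rw [← cast_two_mul_sub_one hk, Real.rpow_natCast]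
  have haq : |a| ^ (2 * k : ℝ) = a ^ (2 * k) := by
    rw [← Nat.cast_ofNat, ← Nat.cast_mul, Real.rpow_natCast, (even_two_mul k).pow_abs]
  have := Real.mul_le_rpow_div_add hpq hc x a
  rw [hcp, hcq, haq] at this
  have hck : 1 / (4 * (k : ℝ) - 2) * c = 1 / (2 * k) := by
    have h4 : (4 * (k : ℝ) - 2) ≠ 0 := by linarith
    rw [hc_def]; field_simp; ring
  rw [← pow_two_mul_sub_one_mul hk c]
  linear_combination this - c ^ (2 * k - 1) * a ^ (2 * k) * hck

lemma mul_sub_half_abs_rpow_eq (hk : 1 ≤ k) (a : ℝ) :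
    ((2 * k - 1 : ℝ) / k) ^ (2 * k - 1) * a ^ (2 * k - 1) * a -
        1 / 2 * |((2 * k - 1 : ℝ) / k) ^ (2 * k - 1) * a ^ (2 * k - 1)| ^
          ((2 * k : ℝ) / (2 * k - 1)) =
      1 / (4 * (k : ℝ) - 2) * ((2 * k - 1 : ℝ) / k) ^ (2 * k) * a ^ (2 * k) := by
  have hk' : (1 : ℝ) ≤ k := by exact_mod_cast hk
  set c : ℝ := (2 * k - 1) / k with hc_def
  have habs : |c ^ (2 * k - 1) * a ^ (2 * k - 1)| ^ ((2 * k : ℝ) / (2 * k - 1)) =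
      c ^ (2 * k) * a ^ (2 * k) := by
    rw [← mul_pow, abs_pow, ← cast_two_mul_sub_one hk,
      show (2 * k : ℝ) = ((2 * k : ℕ) : ℝ) by push_cast; ring,
      Real.pow_rpow_div_eq_pow (abs_nonneg _) (by omega), (even_two_mul k).pow_abs, mul_pow]
  have hck : 1 - c / 2 = 1 / (4 * (k : ℝ) - 2) * c := by
    have h4 : (4 * (k : ℝ) - 2) ≠ 0 := by linarith
    rw [hc_def, div_mul_eq_mul_div, one_mul, eq_div_iff h4]; field_simp; ring
  rw [habs, mul_assoc, pow_two_mul_sub_one_mul hk, ← pow_two_mul_sub_one_mul hk c]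
  linear_combination c ^ (2 * k - 1) * a ^ (2 * k) * hck

end OddPowerConjugate

theorem pnorm_regularizer_psd_constraint_dropped (T : ℕ) (k : ℕ) (hk : 1 ≤ k)
    (ρ : Matrix (Fin T) (Fin T) ℝ) (hρ : ρ.PosSemidef)
    (p : ℝ) (hp : p = (2 * k : ℝ) / (2 * k - 1))
    (g : Matrix (Fin T) (Fin T) ℝ → ℝ)
    (hg : ∀ Θ, g Θ = (∑ r, ∑ s, Θ r s * ρ r s) - (1 / 2) * ∑ r, ∑ s, |Θ r s| ^ p)
    (Θstar : Matrix (Fin T) (Fin T) ℝ)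
    (hΘstar : ∀ r s, Θstar r s = ((2 * k - 1 : ℝ) / k) ^ (2 * k - 1) * ρ r s ^ (2 * k - 1))
    (val : ℝ)
    (hval : val = (1 / (4 * (k : ℝ) - 2)) * ((2 * k - 1 : ℝ) / k) ^ (2 * k) *
      ∑ r, ∑ s, ρ r s ^ (2 * k)) :
    Θstar.PosSemidef ∧
    IsGreatest (g '' {Θ | Θ.PosSemidef}) val ∧
    IsGreatest (Set.range g) val ∧
    g Θstar = val := by
  have hg' : ∀ Θ, g Θ = ∑ r, ∑ s, (Θ r s * ρ r s - 1 / 2 * |Θ r s| ^ p) := by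
    simp only [hg, mul_sum, sum_sub_distrib, implies_true]
  have hval' : val = ∑ r, ∑ s,
      1 / (4 * (k : ℝ) - 2) * ((2 * k - 1 : ℝ) / k) ^ (2 * k) * ρ r s ^ (2 * k) := by
    simp only [hval, mul_sum]
  have hle : ∀ Θ, g Θ ≤ val := fun Θ => by
    rw [hg', hval', hp]
    exact sum_le_sum fun r _ => sum_le_sum fun s _ => mul_sub_half_abs_rpow_le hk _ _
  have hmax : g Θstar = val := by
    rw [hg', hval', hp]
    exact sum_congr rfl fun r _ => sum_congr rfl fun s _ => by
      rw [hΘstar]; exact mul_sub_half_abs_rpow_eq hk _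
  have hpsd : Θstar.PosSemidef := by
    have : Θstar = ((2 * k - 1 : ℝ) / k) ^ (2 * k - 1) • ρ.map (· ^ (2 * k - 1)) := by
      ext r s; simp [hΘstar]
    have hc : (0 : ℝ) ≤ (2 * k - 1) / k :=
      div_nonneg (by linarith [(Nat.one_le_cast.2 hk : (1 : ℝ) ≤ k)]) k.cast_nonneg
    exact this ▸ (hρ.map_pow (by omega)).smul (pow_nonneg hc _)
  refine ⟨hpsd, ⟨⟨Θstar, hpsd, hmax⟩, ?_⟩, ⟨⟨Θstar, hmax⟩, ?_⟩, hmax⟩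
  · rintro _ ⟨Θ, -, rfl⟩; exact hle Θ
  · rintro _ ⟨Θ, rfl⟩; exact hle Θ
end

section
/- Let K ∈ ℝ^{n×n} be symmetric positive semidefinite. The function f: S^T_+ × ℝ^{n×T} → ℝ ∪ {+∞} defined by f(Θ, β) = Σ_{r,s=1}^T Σ_{i,j=1}^n (Θ†)_{sr} β_{is} β_{jr} K_{ij} when every row β_{i·} lies in the range of Θ, and f(Θ, β) = +∞ otherwise, is jointly convex in (Θ, β). -/
open Matrix Finset

/-!
If the rows of `β` lie in the range of `Θ` then `β = Z Θ`, and the Penrose identity `Θ Θ† Θ = Θ`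
turns the quadruple sum into `f(Θ, β) = tr (K Z Θ Zᵀ)`. For every `W` the functional
`(Θ, β) ↦ 2 tr (K β Wᵀ) - tr (K W Θ Wᵀ)` is linear, lies below `f` on the domain since the gap is
`tr (K (Z - W) Θ (Z - W)ᵀ) ≥ 0`, and touches `f` at `W = Z`; so `f` is a supremum of linear
functionals. The domain is convex because for positive semidefinite `A`, `B` the kernel of `A + B`
lies in that of `A`, hence, taking orthogonal complements, the range of `A` lies in that of `A + B`.
-/

section SupportingFunctionals

variable {𝕜 E β : Type*} [Semiring 𝕜] [PartialOrder 𝕜] [AddCommMonoid E] [Module 𝕜 E]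
  [AddCommMonoid β] [PartialOrder β] [IsOrderedAddMonoid β] [Module 𝕜 β] [PosSMulMono 𝕜 β]

theorem convexOn_of_forall_exists_linearMap_le {s : Set E} {f : E → β} (hs : Convex 𝕜 s)
    (h : ∀ x ∈ s, ∃ g : E →ₗ[𝕜] β, g x = f x ∧ ∀ y ∈ s, g y ≤ f y) : ConvexOn 𝕜 s f := by
  refine ⟨hs, fun x hx y hy a b ha hb hab => ?_⟩
  obtain ⟨g, hgf, hg⟩ := h _ (hs hx hy ha hb hab)
  calc f (a • x + b • y) = a • g x + b • g y := by rw [← hgf, map_add, map_smul, map_smul]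
    _ ≤ a • f x + b • f y :=
      add_le_add (smul_le_smul_of_nonneg_left (hg x hx) ha)
        (smul_le_smul_of_nonneg_left (hg y hy) hb)

end SupportingFunctionals

section RangeOfSum

open scoped ComplexOrder

variable {𝕜 m : Type*} [RCLike 𝕜] [Fintype m] {A B : Matrix m m 𝕜}

theorem Matrix.PosSemidef.mulVec_eq_zero_of_add_mulVec_eq_zero (hA : A.PosSemidef)
    (hB : B.PosSemidef) {x : m → 𝕜} (hx : (A + B) *ᵥ x = 0) : A *ᵥ x = 0 := by
  have hsum : star x ⬝ᵥ A *ᵥ x + star x ⬝ᵥ B *ᵥ x = 0 := by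
    rw [← dotProduct_add, ← add_mulVec, hx, dotProduct_zero]
  exact (hA.dotProduct_mulVec_zero_iff x).mp
    ((add_eq_zero_iff_of_nonneg (hA.dotProduct_mulVec_nonneg x)
      (hB.dotProduct_mulVec_nonneg x)).mp hsum).1

theorem Matrix.IsHermitian.range_toEuclideanLin [DecidableEq m] (hA : A.IsHermitian) :
    LinearMap.range A.toEuclideanLin = (LinearMap.ker A.toEuclideanLin)ᗮ := by
  rw [← (isSymmetric_toEuclideanLin_iff.mpr hA).orthogonal_range, Submodule.orthogonal_orthogonal]

theorem Matrix.PosSemidef.range_mulVec_subset_add (hA : A.PosSemidef) (hB : B.PosSemidef) :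
    Set.range A.mulVec ⊆ Set.range (A + B).mulVec := by
  classical
  have hker : LinearMap.ker (A + B).toEuclideanLin ≤ LinearMap.ker A.toEuclideanLin :=
    fun x hx => congrArg (WithLp.toLp 2)
      (hA.mulVec_eq_zero_of_add_mulVec_eq_zero hB (congrArg WithLp.ofLp hx))
  have hrange := Submodule.orthogonal_le hker
  rw [← hA.1.range_toEuclideanLin, ← (hA.add hB).1.range_toEuclideanLin] at hrange
  rintro _ ⟨z, rfl⟩
  obtain ⟨w, hw⟩ := hrange (LinearMap.mem_range_self _ (WithLp.toLp 2 z))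
  exact ⟨w.ofLp, congrArg WithLp.ofLp hw⟩

theorem Matrix.PosSemidef.add_mem_range_mulVec_add (hA : A.PosSemidef) (hB : B.PosSemidef)
    {x y : m → 𝕜} (hx : x ∈ Set.range A.mulVec) (hy : y ∈ Set.range B.mulVec) :
    x + y ∈ Set.range (A + B).mulVec := by
  obtain ⟨u, rfl⟩ := hA.range_mulVec_subset_add hB hx
  obtain ⟨v, rfl⟩ := add_comm B A ▸ hB.range_mulVec_subset_add hA hy
  exact ⟨u + v, mulVec_add _ u v⟩

end RangeOfSum

theorem Matrix.PosSemidef.transpose_eq_self {m : Type*} {A : Matrix m m ℝ} (hA : A.PosSemidef) :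
    Aᵀ = A :=
  hA.1

variable {m n : Type*} [Fintype m]

theorem convex_setOf_posSemidef_and_mem_range_mulVec :
    Convex ℝ {p : Matrix m m ℝ × Matrix n m ℝ |
      p.1.PosSemidef ∧ ∀ i, p.2 i ∈ Set.range p.1.mulVec} := by
  rintro ⟨Θ₁, β₁⟩ ⟨hΘ₁, hβ₁⟩ ⟨Θ₂, β₂⟩ ⟨hΘ₂, hβ₂⟩ a b ha hb -
  have smul_mem {Θ : Matrix m m ℝ} {x : m → ℝ} (c : ℝ) (hx : x ∈ Set.range Θ.mulVec) :
      c • x ∈ Set.range (c • Θ).mulVec := by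
    obtain ⟨z, rfl⟩ := hx
    exact ⟨z, smul_mulVec c Θ z⟩
  exact ⟨(hΘ₁.smul ha).add (hΘ₂.smul hb), fun i =>
    (hΘ₁.smul ha).add_mem_range_mulVec_add (hΘ₂.smul hb) (smul_mem a (hβ₁ i))
      (smul_mem b (hβ₂ i))⟩

theorem exists_eq_mul_transpose_of_mem_range_mulVec {Θ : Matrix m m ℝ} {β : Matrix n m ℝ}
    (h : ∀ i, β i ∈ Set.range Θ.mulVec) : ∃ Z : Matrix n m ℝ, β = Z * Θᵀ := by
  choose Z hZ using h
  refine ⟨Matrix.of Z, ?_⟩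
  ext i s
  rw [← hZ i]
  simp [mul_apply, mulVec, dotProduct, mul_comm]

theorem mul_mul_transpose_mul_transpose_eq {Θ P : Matrix m m ℝ} (hΘ : Θᵀ = Θ)
    (hP : Θ * P * Θ = Θ) (Z : Matrix n m ℝ) :
    Z * Θ * Pᵀ * (Z * Θ)ᵀ = Z * Θ * Zᵀ := by
  have hPt : Θ * Pᵀ * Θ = Θ := by
    simpa only [transpose_mul, hΘ, Matrix.mul_assoc] using congrArg transpose hP
  rw [transpose_mul, hΘ, Matrix.mul_assoc Z Θ Pᵀ, ← Matrix.mul_assoc, Matrix.mul_assoc Z, hPt]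

variable [Fintype n]

theorem sum_mul_mul_mul_eq_trace (P : Matrix m m ℝ) (β : Matrix n m ℝ) (K : Matrix n n ℝ) :
    ∑ r, ∑ s, ∑ i, ∑ j, P s r * β i s * β j r * K i j = trace (K * (β * Pᵀ * βᵀ)) := by
  have hquad : ∀ s r, ∑ i, ∑ j, P s r * β i s * β j r * K i j = (βᵀ * K * β) s r * P s r := by
    intro s r
    simp only [mul_apply, transpose_apply, Finset.sum_mul]
    rw [Finset.sum_comm]
    exact sum_congr rfl fun j _ => sum_congr rfl fun i _ => by ring
  have htrace : trace (K * (β * Pᵀ * βᵀ)) = ∑ s, ∑ r, (βᵀ * K * β) s r * P s r := by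
    rw [← Matrix.mul_assoc, ← Matrix.mul_assoc, trace_mul_comm, ← Matrix.mul_assoc,
      ← Matrix.mul_assoc]
    simp only [trace, Matrix.diag, mul_apply, transpose_apply]
  rw [htrace]
  conv_rhs => rw [Finset.sum_comm]
  exact sum_congr rfl fun r _ => sum_congr rfl fun s _ => hquad s r

theorem trace_mul_mul_mul_transpose_nonneg {K : Matrix n n ℝ} (hK : K.PosSemidef)
    {Θ : Matrix m m ℝ} (hΘ : Θ.PosSemidef) (W : Matrix n m ℝ) :
    0 ≤ trace (K * (W * Θ * Wᵀ)) := by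
  classical
  open scoped MatrixOrder in
  obtain ⟨B, hB⟩ := CStarAlgebra.nonneg_iff_eq_star_mul_self.mp hK.nonneg
  rw [hB, Matrix.mul_assoc, trace_mul_comm, Matrix.star_eq_conjTranspose,
    conjTranspose_eq_transpose_of_trivial]
  simpa only [Matrix.mul_assoc, transpose_mul, conjTranspose_eq_transpose_of_trivial] using
    (hΘ.mul_mul_conjTranspose_same (B * W)).trace_nonneg

theorem trace_mul_mul_mul_transpose_comm {K : Matrix n n ℝ} (hK : Kᵀ = K) {Θ : Matrix m m ℝ}
    (hΘ : Θᵀ = Θ) (U V : Matrix n m ℝ) :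
    trace (K * (U * Θ * Vᵀ)) = trace (K * (V * Θ * Uᵀ)) := by
  rw [← trace_transpose, transpose_mul, transpose_mul, transpose_mul, transpose_transpose, hK, hΘ,
    trace_mul_comm, Matrix.mul_assoc]

def supportingFunctional (K : Matrix n n ℝ) (W : Matrix n m ℝ) :
    Matrix m m ℝ × Matrix n m ℝ →ₗ[ℝ] ℝ where
  toFun p := 2 * trace (K * (p.2 * Wᵀ)) - trace (K * (W * p.1 * Wᵀ))
  map_add' p q := by
    simp only [Prod.fst_add, Prod.snd_add, Matrix.add_mul, Matrix.mul_add, trace_add]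
    ring
  map_smul' c p := by
    simp only [Prod.smul_fst, Prod.smul_snd, Matrix.smul_mul, Matrix.mul_smul, trace_smul,
      smul_eq_mul, RingHom.id_apply]
    ring

theorem supportingFunctional_apply_mul_self (K : Matrix n n ℝ) (Θ : Matrix m m ℝ)
    (Z : Matrix n m ℝ) : supportingFunctional K Z (Θ, Z * Θ) = trace (K * (Z * Θ * Zᵀ)) := by
  change 2 * trace (K * (Z * Θ * Zᵀ)) - trace (K * (Z * Θ * Zᵀ)) = _
  ring

theorem supportingFunctional_apply_mul_le {K : Matrix n n ℝ} (hK : K.PosSemidef)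
    {Θ : Matrix m m ℝ} (hΘ : Θ.PosSemidef) (W Z : Matrix n m ℝ) :
    supportingFunctional K W (Θ, Z * Θ) ≤ trace (K * (Z * Θ * Zᵀ)) := by
  change 2 * trace (K * (Z * Θ * Wᵀ)) - trace (K * (W * Θ * Wᵀ)) ≤ _
  have hsq := trace_mul_mul_mul_transpose_nonneg hK hΘ (Z - W)
  have hcross := trace_mul_mul_mul_transpose_comm hK.transpose_eq_self hΘ.transpose_eq_self Z W
  simp only [Matrix.sub_mul, Matrix.mul_sub, transpose_sub, trace_sub] at hsq
  linarith

theorem joint_convexity_output_kernel_quadratic (T n : ℕ)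
    (K : Matrix (Fin n) (Fin n) ℝ) (hK : K.PosSemidef)
    (pinv : Matrix (Fin T) (Fin T) ℝ → Matrix (Fin T) (Fin T) ℝ)
    (hpinv : ∀ A : Matrix (Fin T) (Fin T) ℝ,
      A * pinv A * A = A ∧ pinv A * A * pinv A = pinv A ∧
      (A * pinv A)ᵀ = A * pinv A ∧ (pinv A * A)ᵀ = pinv A * A)
    (D : Set (Matrix (Fin T) (Fin T) ℝ × Matrix (Fin n) (Fin T) ℝ))
    (hD : D = {p | p.1.PosSemidef ∧ ∀ i : Fin n, (fun s => p.2 i s) ∈ Set.range p.1.mulVec})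
    (f : Matrix (Fin T) (Fin T) ℝ × Matrix (Fin n) (Fin T) ℝ → ℝ)
    (hf : ∀ p, f p = ∑ r, ∑ s, ∑ i, ∑ j, pinv p.1 s r * p.2 i s * p.2 j r * K i j) :
    Convex ℝ D ∧ ConvexOn ℝ D f := by
  have hconv : Convex ℝ D := hD ▸ convex_setOf_posSemidef_and_mem_range_mulVec
  have hf_eq : ∀ p ∈ D, ∃ (Θ : Matrix (Fin T) (Fin T) ℝ) (Z : Matrix (Fin n) (Fin T) ℝ),
      Θ.PosSemidef ∧ p = (Θ, Z * Θ) ∧ f p = trace (K * (Z * Θ * Zᵀ)) := by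
    rintro ⟨Θ, β⟩ hp
    obtain ⟨hΘ, hβ⟩ : Θ.PosSemidef ∧ ∀ i, β i ∈ Set.range Θ.mulVec := by
      rw [hD] at hp; exact hp
    obtain ⟨Z, rfl⟩ := exists_eq_mul_transpose_of_mem_range_mulVec hβ
    rw [hΘ.transpose_eq_self]
    refine ⟨Θ, Z, hΘ, rfl, ?_⟩
    rw [hf, sum_mul_mul_mul_eq_trace,
      mul_mul_transpose_mul_transpose_eq hΘ.transpose_eq_self (hpinv Θ).1]
  refine ⟨hconv, convexOn_of_forall_exists_linearMap_le hconv fun p hp => ?_⟩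
  obtain ⟨Θ, Z, -, rfl, hfp⟩ := hf_eq p hp
  refine ⟨supportingFunctional K Z, ?_, fun q hq => ?_⟩
  · rw [hfp, supportingFunctional_apply_mul_self]
  · obtain ⟨Θ', Z', hΘ', rfl, hfq⟩ := hf_eq q hq
    exact hfq ▸ supportingFunctional_apply_mul_le hK hΘ' Z Z'
end

section
/- The function g: S^T_+ × ℝ^T → ℝ ∪ {+∞} defined by g(A, x) = ⟨x, A† x⟩ if x ∈ range(A) and g(A, x) = +∞ otherwise, is jointly convex on S^T_+ × ℝ^T. -/
/-!
For `x = A u` in the range of a positive semidefinite `A` one has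
`⟨x, A† x⟩ = ⟨u, A u⟩ = max_z (2 ⟨z, x⟩ - ⟨z, A z⟩)`, a maximum of functions that are affine in
`(A, x)`; hence `g` is jointly convex. Concretely, at `C = a A + b B`, `w = a x + b y` the maximiser
`z = C† w` gives `g(C, w) = 2 ⟨z, w⟩ - ⟨z, C z⟩`, which splits into an `a`-part and a `b`-part,
each bounded by the maximum. That `w` lies in the range of `C` comes from
`ker (A + B) = ker A ∩ ker B` for positive semidefinite `A`, `B`.
-/

open Matrix

namespace Matrix

variable {n : Type*} {A B P : Matrix n n ℝ}

lemma PosSemidef.transpose_eq (hA : A.PosSemidef) : Aᵀ = A :=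
  (isHermitian_iff_isSymm.mp hA.isHermitian).eq

variable [Fintype n]

lemma PosSemidef.two_mul_dotProduct_sub_le (hA : A.PosSemidef) (u z : n → ℝ) :
    2 * (z ⬝ᵥ A *ᵥ u) - z ⬝ᵥ A *ᵥ z ≤ u ⬝ᵥ A *ᵥ u := by
  have h := hA.dotProduct_mulVec_nonneg (u - z)
  have hsymm : u ⬝ᵥ A *ᵥ z = z ⬝ᵥ A *ᵥ u := by
    rw [← dotProduct_transpose_mulVec, hA.transpose_eq]
  simp only [star_trivial, mulVec_sub, dotProduct_sub, sub_dotProduct] at h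
  linarith

lemma PosSemidef.mulVec_eq_zero_of_add (hA : A.PosSemidef) (hB : B.PosSemidef) {z : n → ℝ}
    (hz : (A + B) *ᵥ z = 0) : A *ᵥ z = 0 := by
  have hsum : z ⬝ᵥ A *ᵥ z + z ⬝ᵥ B *ᵥ z = 0 := by
    rw [← dotProduct_add, ← add_mulVec, hz, dotProduct_zero]
  have hA0 := hA.dotProduct_mulVec_nonneg z
  have hB0 := hB.dotProduct_mulVec_nonneg z
  simp only [star_trivial] at hA0 hB0
  exact (hA.dotProduct_mulVec_zero_iff z).mp (by rw [star_trivial]; linarith)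

lemma PosSemidef.dotProduct_add_mulVec_le (hA : A.PosSemidef) (hB : B.PosSemidef)
    {u v z : n → ℝ} (h : (A + B) *ᵥ z = A *ᵥ u + B *ᵥ v) :
    z ⬝ᵥ (A + B) *ᵥ z ≤ u ⬝ᵥ A *ᵥ u + v ⬝ᵥ B *ᵥ v := by
  have hAu := hA.two_mul_dotProduct_sub_le u z
  have hBv := hB.two_mul_dotProduct_sub_le v z
  have hz : z ⬝ᵥ (A + B) *ᵥ z = z ⬝ᵥ A *ᵥ u + z ⬝ᵥ B *ᵥ v := by
    rw [h, dotProduct_add]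
  rw [add_mulVec, dotProduct_add] at hz ⊢
  linarith

lemma mulVec_dotProduct_pinv_mulVec (hP : A * P * A = A) (hA : Aᵀ = A)
    (u : n → ℝ) : (A *ᵥ u) ⬝ᵥ P *ᵥ (A *ᵥ u) = u ⬝ᵥ A *ᵥ u := by
  rw [dotProduct_comm, ← dotProduct_transpose_mulVec, hA, mulVec_mulVec, mulVec_mulVec,
    hP]

/-- `C * P` is the orthogonal projection onto the range of `C`, which contains the range of
the symmetric `A` because `ker C ⊆ ker A`. -/
lemma mul_pinv_mul_eq_of_ker_le [DecidableEq n] {C : Matrix n n ℝ} (hCPC : C * P * C = C)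
    (hCP : (C * P)ᵀ = C * P) (hC : Cᵀ = C) (hA : Aᵀ = A)
    (hker : ∀ z, C *ᵥ z = 0 → A *ᵥ z = 0) : C * P * A = A := by
  have hCQ : C * (1 - C * P) = 0 := by
    have h : (1 - C * P) * C = 0 := by rw [sub_mul, one_mul, hCPC, sub_self]
    simpa [transpose_mul, transpose_sub, hC, hCP] using congrArg transpose h
  have hAQ : A * (1 - C * P) = 0 := ext_iff_mulVec.mpr fun s => by
    rw [← mulVec_mulVec, zero_mulVec]
    exact hker _ (by rw [mulVec_mulVec, hCQ, zero_mulVec])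
  have h := congrArg transpose hAQ
  rw [transpose_mul, transpose_sub, transpose_one, hCP, hA, transpose_zero, sub_mul, one_mul,
    sub_eq_zero] at h
  exact h.symm

lemma PosSemidef.add_mulVec_pinv_mulVec_add [DecidableEq n] (hA : A.PosSemidef)
    (hB : B.PosSemidef) (hP : (A + B) * P * (A + B) = A + B) (hPs : ((A + B) * P)ᵀ = (A + B) * P)
    (u v : n → ℝ) : (A + B) *ᵥ (P *ᵥ (A *ᵥ u + B *ᵥ v)) = A *ᵥ u + B *ᵥ v := by
  have hC := (hA.add hB).transpose_eq
  rw [mulVec_mulVec, mulVec_add, mulVec_mulVec, mulVec_mulVec,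
    mul_pinv_mul_eq_of_ker_le hP hPs hC hA.transpose_eq fun z => hA.mulVec_eq_zero_of_add hB,
    mul_pinv_mul_eq_of_ker_le hP hPs hC hB.transpose_eq fun z hz =>
      hB.mulVec_eq_zero_of_add hA (by rwa [add_comm])]

lemma PosSemidef.dotProduct_pinv_mulVec_add_le [DecidableEq n] (hA : A.PosSemidef)
    (hB : B.PosSemidef) (hP : (A + B) * P * (A + B) = A + B) (hPs : ((A + B) * P)ᵀ = (A + B) * P)
    (u v : n → ℝ) :
    (A *ᵥ u + B *ᵥ v) ⬝ᵥ P *ᵥ (A *ᵥ u + B *ᵥ v) ≤ u ⬝ᵥ A *ᵥ u + v ⬝ᵥ B *ᵥ v := by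
  have hw := hA.add_mulVec_pinv_mulVec_add hB hP hPs u v
  rw [← hw, mulVec_dotProduct_pinv_mulVec hP (hA.add hB).transpose_eq]
  exact hA.dotProduct_add_mulVec_le hB hw

end Matrix

theorem joint_convexity_pseudoinverse_quadratic (T : ℕ)
    (pinv : Matrix (Fin T) (Fin T) ℝ → Matrix (Fin T) (Fin T) ℝ)
    (hpinv : ∀ A : Matrix (Fin T) (Fin T) ℝ,
      A * pinv A * A = A ∧ pinv A * A * pinv A = pinv A ∧
      (A * pinv A)ᵀ = A * pinv A ∧ (pinv A * A)ᵀ = pinv A * A)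
    (D : Set (Matrix (Fin T) (Fin T) ℝ × (Fin T → ℝ)))
    (hD : D = {p | p.1.PosSemidef ∧ p.2 ∈ Set.range p.1.mulVec})
    (g : Matrix (Fin T) (Fin T) ℝ × (Fin T → ℝ) → ℝ)
    (hg : ∀ p, g p = p.2 ⬝ᵥ (pinv p.1).mulVec p.2) :
    Convex ℝ D ∧ ConvexOn ℝ D g := by
  have hconvex : Convex ℝ D := by
    subst hD
    rintro ⟨A, x⟩ ⟨hA, u, hx : A *ᵥ u = x⟩ ⟨B, y⟩ ⟨hB, v, hy : B *ᵥ v = y⟩ a b ha hb -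
    subst hx hy
    have hA' := hA.smul ha
    have hB' := hB.smul hb
    refine ⟨hA'.add hB', _,
      (hA'.add_mulVec_pinv_mulVec_add hB' (hpinv _).1 (hpinv _).2.2.1 u v).trans ?_⟩
    simp only [smul_mulVec, Prod.smul_mk, Prod.mk_add_mk]
  refine ⟨hconvex, hconvex, ?_⟩
  subst hD
  rintro ⟨A, x⟩ ⟨hA, u, hx : A *ᵥ u = x⟩ ⟨B, y⟩ ⟨hB, v, hy : B *ᵥ v = y⟩ a b ha hb -
  subst hx hy
  have hA' := hA.smul ha
  have hB' := hB.smul hb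
  have key := hA'.dotProduct_pinv_mulVec_add_le hB' (hpinv _).1 (hpinv _).2.2.1 u v
  simp only [hg, Prod.smul_mk, Prod.mk_add_mk, smul_eq_mul,
    mulVec_dotProduct_pinv_mulVec (hpinv _).1 hA.transpose_eq,
    mulVec_dotProduct_pinv_mulVec (hpinv _).1 hB.transpose_eq]
  simpa [smul_mulVec] using key
end

section
/- The function φ*(y) = y·arcsinh(y) − √(1+y²) + 1 satisfies φ*(y)/ (y²/2) → 1 as y → 0, and φ*(y) − (|y|(log(2|y|) − 1) + 1) → 0 as |y| → ∞. -/
/-!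
Near `0`, `φ*` and `y ^ 2 / 2` both vanish, with derivatives `arsinh y` and `y` whose ratio tends
to `1`, so l'Hôpital's rule gives the first limit. For `y > 0` write
`arsinh y = log (2 * y) + L` with `L = log ((y + √(1 + y ^ 2)) / (2 * y))`; the difference in the
second limit is then `y * L - (√(1 + y ^ 2) - y)`, and `0 ≤ y * L ≤ (√(1 + y ^ 2) - y) / 2` by
`log t ≤ t - 1`. So it is bounded by `√(1 + y ^ 2) - y = (√(1 + y ^ 2) + y)⁻¹ → 0`. Both functions
are even, which takes care of `y → -∞`.
-/

open Real Filter Topology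

theorem Function.Even.tendsto_cocompact_of_tendsto_atTop {α β : Type*} [AddCommGroup α]
    [LinearOrder α] [IsOrderedAddMonoid α] [Nontrivial α] [TopologicalSpace α] [OrderTopology α]
    [CompactIccSpace α] {f : α → β} {l : Filter β} (hf : f.Even) (h : Tendsto f atTop l) :
    Tendsto f (cocompact α) l := by
  rw [cocompact_eq_atBot_atTop]
  exact (h.comp tendsto_neg_atBot_atTop |>.congr fun x => hf x).sup h

theorem tendsto_arsinh_div_self_nhdsNE : Tendsto (fun y => arsinh y / y) (𝓝[≠] 0) (𝓝 1) := by
  simpa [slope_fun_def_field, arsinh_zero] using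
    hasDerivAt_iff_tendsto_slope.mp (hasDerivAt_arsinh 0)

theorem sqrt_one_add_sq_sub_self_eq_inv (y : ℝ) : √(1 + y ^ 2) - y = (√(1 + y ^ 2) + y)⁻¹ := by
  refine eq_inv_of_mul_eq_one_left ?_
  nlinarith [sq_sqrt (by positivity : (0 : ℝ) ≤ 1 + y ^ 2)]

theorem tendsto_sqrt_one_add_sq_sub_self_atTop :
    Tendsto (fun y => √(1 + y ^ 2) - y) atTop (𝓝 0) := by
  simp only [sqrt_one_add_sq_sub_self_eq_inv]
  exact (tendsto_atTop_mono (fun y => le_add_of_nonneg_left (sqrt_nonneg _))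
    tendsto_id).inv_tendsto_atTop

noncomputable def coshConjugate (y : ℝ) : ℝ := y * arsinh y - √(1 + y ^ 2) + 1

theorem coshConjugate_neg (y : ℝ) : coshConjugate (-y) = coshConjugate y := by
  simp [coshConjugate, arsinh_neg]

theorem hasDerivAt_coshConjugate (y : ℝ) : HasDerivAt coshConjugate (arsinh y) y := by
  have hsqrt := ((hasDerivAt_pow 2 y).const_add 1).sqrt (by positivity)
  refine ((((hasDerivAt_id' y).mul (hasDerivAt_arsinh y)).sub hsqrt).add_const 1).congr_deriv ?_
  field_simp
  ring

theorem tendsto_coshConjugate_div_sq_nhdsNE :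
    Tendsto (fun y => coshConjugate y / (y ^ 2 / 2)) (𝓝[≠] 0) (𝓝 1) := by
  have hsq (y : ℝ) : HasDerivAt (fun y : ℝ => y ^ 2 / 2) y y := by
    simpa using (hasDerivAt_pow 2 y).div_const 2
  refine HasDerivAt.lhopital_zero_nhdsNE (.of_forall hasDerivAt_coshConjugate) (.of_forall hsq)
    self_mem_nhdsWithin ?_ ?_ tendsto_arsinh_div_self_nhdsNE
  · simpa [coshConjugate] using
      (hasDerivAt_coshConjugate 0).continuousAt.tendsto.mono_left nhdsWithin_le_nhds
  · simpa using (hsq 0).continuousAt.tendsto.mono_left nhdsWithin_le_nhds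

theorem abs_coshConjugate_sub_le {y : ℝ} (hy : 0 < y) :
    |coshConjugate y - (y * (log (2 * y) - 1) + 1)| ≤ √(1 + y ^ 2) - y := by
  set s := √(1 + y ^ 2)
  have hys : y < s := lt_sqrt_of_sq_lt (by linarith)
  set L := log ((y + s) / (2 * y))
  have hyL_nonneg : 0 ≤ y * L :=
    mul_nonneg hy.le (log_nonneg <| by rw [le_div_iff₀ (by positivity)]; linarith)
  have hL_le : y * L ≤ (s - y) / 2 := by
    calc y * L ≤ y * ((y + s) / (2 * y) - 1) :=
          mul_le_mul_of_nonneg_left (log_le_sub_one_of_pos (by positivity)) hy.le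
      _ = (s - y) / 2 := by field_simp; ring
  have hdiff : coshConjugate y - (y * (log (2 * y) - 1) + 1) = y * L - (s - y) := by
    rw [coshConjugate, arsinh, show L = _ from log_div (by positivity) (by positivity)]
    ring
  rw [hdiff, abs_le]
  constructor <;> linarith

theorem tendsto_coshConjugate_sub_atTop :
    Tendsto (fun y => coshConjugate y - (|y| * (log (2 * |y|) - 1) + 1)) atTop (𝓝 0) := by
  refine squeeze_zero_norm' ?_ tendsto_sqrt_one_add_sq_sub_self_atTop
  filter_upwards [eventually_gt_atTop 0] with y hy
  rw [abs_of_pos hy, norm_eq_abs]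
  exact abs_coshConjugate_sub_le hy

theorem cosh_conjugate_asymptotics :
    Tendsto (fun y : ℝ => (y * arsinh y - Real.sqrt (1 + y ^ 2) + 1) / (y ^ 2 / 2))
      (nhdsWithin 0 {0}ᶜ) (nhds 1) ∧
    Tendsto (fun y : ℝ =>
        (y * arsinh y - Real.sqrt (1 + y ^ 2) + 1) - (|y| * (Real.log (2 * |y|) - 1) + 1))
      (cocompact ℝ) (nhds 0) := by
  have heven : Function.Even fun y => coshConjugate y - (|y| * (log (2 * |y|) - 1) + 1) :=
    fun y => by simp only [coshConjugate_neg, abs_neg]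
  exact ⟨tendsto_coshConjugate_div_sq_nhdsNE,
    heven.tendsto_cocompact_of_tendsto_atTop tendsto_coshConjugate_sub_atTop⟩
end
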